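/- Let p be prime, n ≥ 1, 1 ≤ k ≤ n, H ⊆ SL₂(ℤ/pⁿℤ) a subgroup, and H_k the image of H in SL₂(ℤ/p^kℤ) under reduction. Then the reduction map induces a bijection between the double coset space I_k(ℤ/pⁿℤ) \ SL₂(ℤ/pⁿℤ) / H and the double coset space Γ₀(ℤ/p^kℤ) \ SL₂(ℤ/p^kℤ) / H_k. -/

import Mathlib

open Matrix

/-- The Borel subgroup `Γ₀(R)` of upper triangular matrices in `SL₂(R)`. -/
def Gamma0 (R : Type*) [CommRing R] : Subgroup (Matrix.SpecialLinearGroup (Fin 2) R) where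
  carrier := {A | A.1 1 0 = 0}
  one_mem' := by simp [Matrix.one_apply]
  mul_mem' := by
    intro a b ha hb
    simp only [Set.mem_setOf_eq] at *
    have : ((a * b : Matrix.SpecialLinearGroup (Fin 2) _)).1 1 0
        = a.1 1 0 * b.1 0 0 + a.1 1 1 * b.1 1 0 := by
      simp [Matrix.mul_apply, Fin.sum_univ_two]
    rw [this, ha, hb]; ring
  inv_mem' := by
    intro a ha
    simp only [Set.mem_setOf_eq] at *
    rw [Matrix.SpecialLinearGroup.SL2_inv_expl]
    simp [ha]

/-- A pair is unimodular (over a local ring) if one of its entries is a unit. -/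
def IsUnimodular {R : Type*} [CommRing R] (v : Fin 2 → R) : Prop :=
  IsUnit (v 0) ∨ IsUnit (v 1)

def P1Setoid (R : Type*) [CommRing R] : Setoid {v : Fin 2 → R // IsUnimodular v} where
  r x y := ∃ u : Rˣ, u • x.1 = y.1
  iseqv := by
    refine ⟨fun x => ⟨1, one_smul _ _⟩, ?_, ?_⟩
    · rintro x y ⟨u, h⟩
      exact ⟨u⁻¹, by rw [← h, inv_smul_smul]⟩
    · rintro x y z ⟨u, h⟩ ⟨w, h2⟩
      exact ⟨w * u, by rw [← h2, ← h]; exact (smul_smul w u x.1).symm ▸ rfl⟩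

/-- The projective line over `R`: unimodular pairs up to unit scaling. -/
def P1 (R : Type*) [CommRing R] := Quotient (P1Setoid R)

def P1.mk {R : Type*} [CommRing R] (v : Fin 2 → R) (h : IsUnimodular v) : P1 R :=
  Quotient.mk (P1Setoid R) ⟨v, h⟩

theorem isUnimodular_mulVec {R : Type*} [CommRing R] [IsLocalRing R]
    (g : Matrix.SpecialLinearGroup (Fin 2) R) {v : Fin 2 → R} (hv : IsUnimodular v) :
    IsUnimodular (g.1.mulVec v) := by
  by_contra h
  rw [IsUnimodular, not_or] at h
  obtain ⟨h0, h1⟩ := h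
  have hv' : v = (g⁻¹).1.mulVec (g.1.mulVec v) := by
    rw [Matrix.mulVec_mulVec, ← Matrix.SpecialLinearGroup.coe_mul, inv_mul_cancel]
    simp
  have key : ∀ i, ¬ IsUnit (v i) := by
    intro i
    rw [hv']
    have hexp : (g⁻¹).1.mulVec (g.1.mulVec v) i
        = (g⁻¹).1 i 0 * (g.1.mulVec v 0) + (g⁻¹).1 i 1 * (g.1.mulVec v 1) := by
      simp [Matrix.mulVec, dotProduct, Fin.sum_univ_two]
    rw [hexp]
    intro hu
    have m0 : (g⁻¹).1 i 0 * (g.1.mulVec v 0) ∈ nonunits R := by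
      intro hc
      exact h0 (isUnit_of_mul_isUnit_right hc)
    have m1 : (g⁻¹).1 i 1 * (g.1.mulVec v 1) ∈ nonunits R := by
      intro hc
      exact h1 (isUnit_of_mul_isUnit_right hc)
    exact (IsLocalRing.nonunits_add m0 m1) hu
  rcases hv with h | h
  · exact key 0 h
  · exact key 1 h

noncomputable instance P1.smul {R : Type*} [CommRing R] [IsLocalRing R] :
    SMul (Matrix.SpecialLinearGroup (Fin 2) R) (P1 R) where
  smul g := Quotient.map
    (fun v => ⟨g.1.mulVec v.1, isUnimodular_mulVec g v.2⟩)
    (by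
      rintro x y ⟨u, h⟩
      refine ⟨u, ?_⟩
      simp only [← h]
      rw [Units.smul_def, Units.smul_def, Matrix.mulVec_smul])

theorem P1.smul_mk {R : Type*} [CommRing R] [IsLocalRing R]
    (g : Matrix.SpecialLinearGroup (Fin 2) R) (v : Fin 2 → R) (h : IsUnimodular v) :
    g • (P1.mk v h) = P1.mk (g.1.mulVec v) (isUnimodular_mulVec g h) := rfl

noncomputable instance P1.mulAction {R : Type*} [CommRing R] [IsLocalRing R] :
    MulAction (Matrix.SpecialLinearGroup (Fin 2) R) (P1 R) where
  one_smul := by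
    intro x
    induction x using Quotient.ind with
    | _ v =>
      show Quotient.map _ _ _ = _
      rw [Quotient.map_mk]
      congr 1
      exact Subtype.ext (by simp)
  mul_smul := by
    intro g h x
    induction x using Quotient.ind with
    | _ v =>
      show Quotient.map _ _ _ = Quotient.map _ _ (Quotient.map _ _ _)
      rw [Quotient.map_mk, Quotient.map_mk, Quotient.map_mk]
      congr 1
      exact Subtype.ext (by simp only [Matrix.SpecialLinearGroup.coe_mul, Matrix.mulVec_mulVec])

theorem zmod_pow_isUnit_iff (p : ℕ) [hp : Fact p.Prime] (n : ℕ) [NeZero n]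
    (x : ZMod (p^n)) : IsUnit x ↔ ¬ (p ∣ x.val) := by
  haveI : NeZero (p^n) := ⟨pow_ne_zero n hp.out.ne_zero⟩
  conv_lhs => rw [← ZMod.natCast_rightInverse x]
  rw [ZMod.isUnit_iff_coprime]
  rw [Nat.coprime_pow_right_iff (Nat.pos_of_ne_zero (NeZero.ne n))]
  rw [Nat.coprime_comm]
  exact hp.out.coprime_iff_not_dvd

instance zmod_pow_isLocalRing (p : ℕ) [hp : Fact p.Prime] (n : ℕ) [NeZero n] :
    IsLocalRing (ZMod (p^n)) := by
  haveI : NeZero (p^n) := ⟨pow_ne_zero n hp.out.ne_zero⟩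
  haveI : Fact (1 < p^n) :=
    ⟨Nat.one_lt_pow (NeZero.ne n) hp.out.one_lt⟩
  refine IsLocalRing.of_nonunits_add ?_
  intro a b ha hb
  rw [mem_nonunits_iff, zmod_pow_isUnit_iff, not_not] at ha hb ⊢
  rw [ZMod.val_add]
  rw [Nat.dvd_mod_iff (dvd_pow_self p (NeZero.ne n))]
  exact Nat.dvd_add ha hb

theorem isUnimodular_pair_left {R : Type*} [CommRing R] {a b : R} (h : IsUnit a) :
    IsUnimodular ![a, b] := Or.inl (by simpa using h)

/-- The Hecke-Iwahori subgroup of level `k`: matrices in `SL₂(ℤ/pⁿℤ)` whose lower-left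
entry is divisible by `p^k`. -/
def Iwahori (p n k : ℕ) : Subgroup (Matrix.SpecialLinearGroup (Fin 2) (ZMod (p ^ n))) where
  carrier := {A | ∃ c, A.1 1 0 = (p : ZMod (p ^ n)) ^ k * c}
  one_mem' := ⟨0, by simp [Matrix.one_apply]⟩
  mul_mem' := by
    rintro a b ⟨c1, h1⟩ ⟨c2, h2⟩
    refine ⟨c1 * b.1 0 0 + a.1 1 1 * c2, ?_⟩
    have e : ((a * b : Matrix.SpecialLinearGroup (Fin 2) _)).1 1 0
        = a.1 1 0 * b.1 0 0 + a.1 1 1 * b.1 1 0 := by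
      simp [Matrix.mul_apply, Fin.sum_univ_two]
    rw [e, h1, h2]; ring
  inv_mem' := by
    rintro a ⟨c, h⟩
    refine ⟨-c, ?_⟩
    rw [Matrix.SpecialLinearGroup.SL2_inv_expl]
    simp [h]

/-- Reduction `SL₂(ℤ/pⁿℤ) →* SL₂(ℤ/p^kℤ)`. -/
noncomputable def redSL (p n k : ℕ) (hkn : k ≤ n) :
    Matrix.SpecialLinearGroup (Fin 2) (ZMod (p ^ n)) →*
      Matrix.SpecialLinearGroup (Fin 2) (ZMod (p ^ k)) :=
  Matrix.SpecialLinearGroup.map (ZMod.castHom (pow_dvd_pow p hkn) (ZMod (p ^ k)))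

/-!
Since `k ≥ 1` and `ℤ/pⁿℤ` is local, reduction `SL₂(ℤ/pⁿℤ) → SL₂(ℤ/p^kℤ)` is surjective: lift a
matrix entrywise; its determinant reduces to `1`, hence is a unit, and rescaling a row by its
inverse gives a lift in `SL₂`. The Iwahori subgroup is exactly the preimage of the Borel subgroup.
For any surjective homomorphism `f : G → G'`, the double cosets `f⁻¹(K) \ G / H` correspond to
`K \ G' / f(H)`, because `f(y) = a f(x) f(b)` with `a ∈ K`, `b ∈ H` lifts to
`y = (y b⁻¹ x⁻¹) x b` with `y b⁻¹ x⁻¹ ∈ f⁻¹(K)`.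
-/

namespace DoubleCoset

variable {G G' : Type*} [Group G] [Group G']

theorem setoid_comap_map_iff (f : G →* G') (K : Subgroup G') (H : Subgroup G) (x y : G) :
    setoid (K.comap f : Set G) H x y ↔ setoid (K : Set G') (H.map f) (f x) (f y) := by
  simp only [rel_iff, Subgroup.mem_comap, Subgroup.mem_map]
  constructor
  · rintro ⟨a, ha, b, hb, rfl⟩
    exact ⟨f a, ha, f b, ⟨b, hb, rfl⟩, by simp only [map_mul]⟩
  · rintro ⟨a, ha, -, ⟨b, hb, rfl⟩, hy⟩
    refine ⟨y * b⁻¹ * x⁻¹, ?_, b, hb, by group⟩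
    have hfa : f (y * b⁻¹ * x⁻¹) = a := by
      simp only [map_mul, map_inv, hy]
      group
    rwa [hfa]

def mapOfComap (f : G →* G') (K : Subgroup G') (H : Subgroup G) :
    Quotient (K.comap f : Set G) H → Quotient (K : Set G') (H.map f) :=
  Quotient.map' f fun x y => (setoid_comap_map_iff f K H x y).mp

theorem mapOfComap_mk (f : G →* G') (K : Subgroup G') (H : Subgroup G) (g : G) :
    mapOfComap f K H (mk (K.comap f) H g) = mk K (H.map f) (f g) :=
  rfl

theorem mapOfComap_injective (f : G →* G') (K : Subgroup G') (H : Subgroup G) :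
    Function.Injective (mapOfComap f K H) := by
  rintro ⟨x⟩ ⟨y⟩ hxy
  exact Quotient.sound ((setoid_comap_map_iff f K H x y).mpr (Quotient.exact hxy))

theorem mapOfComap_surjective {f : G →* G'} (hf : Function.Surjective f) (K : Subgroup G')
    (H : Subgroup G) : Function.Surjective (mapOfComap f K H) := by
  rintro ⟨x'⟩
  obtain ⟨x, rfl⟩ := hf x'
  exact ⟨mk _ _ x, rfl⟩

end DoubleCoset

theorem ZMod.castHom_eq_zero_iff {m d : ℕ} (h : d ∣ m) (x : ZMod m) :
    ZMod.castHom h (ZMod d) x = 0 ↔ (d : ZMod m) ∣ x := by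
  constructor
  · intro hx
    rw [← ZMod.intCast_zmod_cast x, map_intCast, ZMod.intCast_zmod_eq_zero_iff_dvd] at hx
    obtain ⟨c, hc⟩ := hx
    exact ⟨c, by rw [← ZMod.intCast_zmod_cast x, hc]; push_cast; rfl⟩
  · rintro ⟨c, rfl⟩
    rw [map_mul, map_natCast, ZMod.natCast_self, zero_mul]

theorem Matrix.SpecialLinearGroup.map_surjective {ι R S : Type*} [Fintype ι] [DecidableEq ι]
    [Nonempty ι] [CommRing R] [CommRing S] (f : R →+* S) [IsLocalHom f]
    (hf : Function.Surjective f) : Function.Surjective (SpecialLinearGroup.map (n := ι) f) := by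
  intro A
  let M : Matrix ι ι R := (A : Matrix ι ι S).map (Function.surjInv hf)
  have hM : M.map f = A := by
    ext i j
    exact Function.surjInv_eq hf _
  have hdet : f M.det = 1 := by
    rw [RingHom.map_det, RingHom.mapMatrix_apply, hM, A.det_coe]
  obtain ⟨u, hu⟩ : IsUnit M.det := IsUnit.of_map f _ (hdet ▸ isUnit_one)
  have hfu : f ↑u⁻¹ = 1 := by
    simpa [hu, hdet] using congrArg f u.inv_mul
  let i₀ := Classical.arbitrary ι
  refine ⟨⟨M.updateRow i₀ ((↑u⁻¹ : R) • M i₀), ?_⟩, ?_⟩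
  · rw [det_updateRow_smul, updateRow_eq_self, ← hu, Units.inv_mul]
  · ext i j
    change f (M.updateRow i₀ ((↑u⁻¹ : R) • M i₀) i j) = A i j
    rw [← hM, updateRow_apply]
    split_ifs with hi
    · simp [hi, hfu]
    · rfl

theorem iwahori_eq_comap_redSL (p n k : ℕ) (hkn : k ≤ n) :
    Iwahori p n k = (Gamma0 (ZMod (p ^ k))).comap (redSL p n k hkn) := by
  ext A
  change (p : ZMod (p ^ n)) ^ k ∣ A 1 0 ↔ ZMod.castHom (pow_dvd_pow p hkn) _ (A 1 0) = 0
  rw [ZMod.castHom_eq_zero_iff, Nat.cast_pow]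

theorem redSL_surjective (p : ℕ) [Fact p.Prime] (n k : ℕ) [NeZero k] (hkn : k ≤ n) :
    Function.Surjective (redSL p n k hkn) := by
  have : NeZero n := ⟨(Nat.pos_of_neZero k).trans_le hkn |>.ne'⟩
  have : Fact (1 < p ^ k) := ⟨Nat.one_lt_pow (NeZero.ne k) (Fact.out : p.Prime).one_lt⟩
  have hsurj := ZMod.castHom_surjective (pow_dvd_pow p hkn)
  have := IsLocalHom.of_surjective _ hsurj
  exact Matrix.SpecialLinearGroup.map_surjective _ hsurj

/-- The reduction map mod `p^k` induces a bijection between the double coset spaces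
`I_k(ℤ/pⁿℤ) \\ SL₂(ℤ/pⁿℤ) / H` and `Γ₀(ℤ/p^kℤ) \\ SL₂(ℤ/p^kℤ) / H_k`,
where `H_k` is the image of `H` under reduction. -/
theorem iwahori_doset_equiv_borel_doset (p : ℕ) [Fact p.Prime] (n k : ℕ) [NeZero k]
    (hkn : k ≤ n) (H : Subgroup (Matrix.SpecialLinearGroup (Fin 2) (ZMod (p ^ n)))) :
    ∃ F : DoubleCoset.Quotient
          (Iwahori p n k : Set (Matrix.SpecialLinearGroup (Fin 2) (ZMod (p ^ n))))
          (H : Set (Matrix.SpecialLinearGroup (Fin 2) (ZMod (p ^ n)))) →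
        DoubleCoset.Quotient
          (Gamma0 (ZMod (p ^ k)) : Set (Matrix.SpecialLinearGroup (Fin 2) (ZMod (p ^ k))))
          (H.map (redSL p n k hkn) : Set (Matrix.SpecialLinearGroup (Fin 2) (ZMod (p ^ k)))),
      (∀ g : Matrix.SpecialLinearGroup (Fin 2) (ZMod (p ^ n)),
        F (DoubleCoset.mk (Iwahori p n k) H g)
          = DoubleCoset.mk (Gamma0 (ZMod (p ^ k))) (H.map (redSL p n k hkn)) (redSL p n k hkn g)) ∧
      Function.Bijective F := by
  rw [iwahori_eq_comap_redSL p n k hkn]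
  exact ⟨DoubleCoset.mapOfComap _ _ H, DoubleCoset.mapOfComap_mk _ _ H,
    DoubleCoset.mapOfComap_injective _ _ H,
    DoubleCoset.mapOfComap_surjective (redSL_surjective p n k hkn) _ H⟩
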